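/- Let U be a unitary n×n complex matrix all of whose entries belong to 𝔻[ω] = ℤ[1/√2, i]. Then there exists a finite sequence U₁, ..., U_h of one- and two-level unitary n×n matrices of types X, H, T, and ω such that U = U₁⋯U_h. -/

import Mathlib

noncomputable section

/-- The eighth root of unity `ω = e^{iπ/4} = (1+i)/√2`. -/
def ω : ℂ := (1 + Complex.I) / Real.sqrt 2

/-- A rational number is dyadic if it has the form `a / 2^n` with `a ∈ ℤ`, `n ∈ ℕ`. -/
def IsDyadic (q : ℚ) : Prop := ∃ (a : ℤ) (n : ℕ), q = a / 2 ^ n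

/-- Membership in the ring `𝔻[ω] = ℤ[1/√2, i]`: complex numbers of the form
`aω³ + bω² + cω + d` with `a, b, c, d` dyadic rationals. -/
def inDω (t : ℂ) : Prop :=
  ∃ a b c d : ℚ, IsDyadic a ∧ IsDyadic b ∧ IsDyadic c ∧ IsDyadic d ∧
    t = (a : ℂ) * ω ^ 3 + (b : ℂ) * ω ^ 2 + (c : ℂ) * ω + (d : ℂ)

/-- Membership in the ring `ℤ[ω]`: complex numbers of the form
`aω³ + bω² + cω + d` with `a, b, c, d ∈ ℤ`. -/
def inZω (t : ℂ) : Prop :=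
  ∃ a b c d : ℤ, t = (a : ℂ) * ω ^ 3 + (b : ℂ) * ω ^ 2 + (c : ℂ) * ω + (d : ℂ)

/-- The Hadamard gate. -/
def Hmat : Matrix (Fin 2) (Fin 2) ℂ := ((Real.sqrt 2 : ℂ))⁻¹ • !![1, 1; 1, -1]

/-- The phase gate `S`. -/
def Smat : Matrix (Fin 2) (Fin 2) ℂ := !![1, 0; 0, Complex.I]

/-- The `T` gate. -/
def Tmat : Matrix (Fin 2) (Fin 2) ℂ := !![1, 0; 0, ω]

/-- The `X` (not) gate. -/
def Xmat : Matrix (Fin 2) (Fin 2) ℂ := !![0, 1; 1, 0]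

/-- The controlled-not gate, as a matrix on two qubits: it sends `|a,b⟩` to `|a, a+b⟩`. -/
def CNOTmat : Matrix (Fin 2 × Fin 2) (Fin 2 × Fin 2) ℂ :=
  Matrix.of fun p q => if p.1 = q.1 ∧ p.2 = q.1 + q.2 then 1 else 0

/-- The one-level `n×n` matrix `a_[j]` of type `a`: the identity except that the `(j,j)`
entry is `a`. -/
def oneLevel {n : ℕ} (a : ℂ) (j : Fin n) : Matrix (Fin n) (Fin n) ℂ :=
  Matrix.of fun p q => if p = q then (if p = j then a else 1) else 0

/-- The two-level `n×n` matrix `U_[j,l]` of type `U`: the identity except that the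
`(j,j), (j,l), (l,j), (l,l)` entries are those of the `2×2` matrix `U`. -/
def twoLevel {n : ℕ} (U : Matrix (Fin 2) (Fin 2) ℂ) (j l : Fin n) :
    Matrix (Fin n) (Fin n) ℂ :=
  Matrix.of fun p q =>
    if p = j ∧ q = j then U 0 0
    else if p = j ∧ q = l then U 0 1
    else if p = l ∧ q = j then U 1 0
    else if p = l ∧ q = l then U 1 1
    else if p = q then 1 else 0

/-- A one- or two-level matrix of type `X`, `H`, `T` (two-level) or `ω` (one-level). -/
def IsLevelGen {n : ℕ} (M : Matrix (Fin n) (Fin n) ℂ) : Prop :=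
  (∃ j l : Fin n, j ≠ l ∧
      (M = twoLevel Xmat j l ∨ M = twoLevel Hmat j l ∨ M = twoLevel Tmat j l))
  ∨ (∃ j : Fin n, M = oneLevel ω j)

/-!
A column `v` of a unitary matrix over `𝔻[ω]` is `w / √2 ^ k` with `w ∈ ℤ[ω]ⁿ`, and for
`t ∈ ℤ[ω]` one has `|t|² = p(t) + q(t) √2` with `p, q ∈ ℤ`. Since `∑ |wᵢ|² = 2 ^ k` and `√2` is
irrational, `∑ p(wᵢ) = 2 ^ k` and `∑ q(wᵢ) = 0`; so for `k > 0` the entries with `p` odd, and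
then those with `q` odd, come in even number. Applying `ω^m` and then `H` to two entries `x, y`
of the same kind replaces them by `(x ± ω^m y) / √2`. Modulo 2, multiplication by `ω` rotates
the coordinates of `y`, so some `m` makes both new numerators integral and of a better kind.
Once every numerator is divisible by `√2`, the exponent `k` drops; at `k = 0` the column is
`ω^m eᵢ`, which `ω` and `X` move to `eⱼ`. Treating the columns of `Uᴴ` one after another, each
reduction fixing the columns already done, gives generators with `L.prod * Uᴴ = 1`, that is,
`U = L.prod`.
-/

lemma ofReal_sqrt_two_ne_zero : (Real.sqrt 2 : ℂ) ≠ 0 := by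
  exact_mod_cast (Real.sqrt_pos.2 two_pos).ne'

lemma ofReal_sqrt_two_sq : (Real.sqrt 2 : ℂ) ^ 2 = 2 := by
  exact_mod_cast Real.sq_sqrt zero_le_two

lemma omega_sq : ω ^ 2 = Complex.I := by
  rw [ω, div_pow, ofReal_sqrt_two_sq]
  linear_combination (1 / 2 : ℂ) * Complex.I_sq

lemma omega_pow_four : ω ^ 4 = -1 := by
  rw [show ω ^ 4 = (ω ^ 2) ^ 2 by ring, omega_sq, Complex.I_sq]

lemma omega_pow_eight : ω ^ 8 = 1 := by
  rw [show ω ^ 8 = (ω ^ 4) ^ 2 by ring, omega_pow_four]; norm_num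

lemma sqrt_two_eq : (Real.sqrt 2 : ℂ) = ω - ω ^ 3 := by
  rw [show ω - ω ^ 3 = ω * (1 - ω ^ 2) by ring, omega_sq, ω]
  field_simp
  linear_combination ofReal_sqrt_two_sq + Complex.I_sq

lemma star_omega : star ω = -ω ^ 3 := by
  rw [show -ω ^ 3 = -(ω ^ 2 * ω) by ring, omega_sq, ω]
  simp only [Complex.star_def, map_div₀, map_add, map_one, Complex.conj_I, Complex.conj_ofReal]
  field_simp
  linear_combination Complex.I_sq

lemma star_omega_mul_omega : star ω * ω = 1 := by
  rw [star_omega]; linear_combination -omega_pow_four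

lemma int_eq_of_add_mul_sqrt_two_eq {a b c : ℤ} (h : (a : ℂ) + b * Real.sqrt 2 = c) :
    a = c ∧ b = 0 := by
  have hR : (a : ℝ) + b * Real.sqrt 2 = c := by exact_mod_cast h
  have hb : b = 0 := by
    by_contra hb
    refine irrational_sqrt_two ⟨(c - a) / b, ?_⟩
    push_cast
    field_simp
    linarith
  subst hb
  exact ⟨by simpa using hR, rfl⟩

open Finset in
lemma Int.even_sum_iff_even_card_odd {ι : Type*} (s : Finset ι) (f : ι → ℤ) :
    Even (∑ i ∈ s, f i) ↔ Even #{i ∈ s | Odd (f i)} := by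
  classical
  induction s using Finset.induction_on with
  | empty => simp
  | insert a s ha ih =>
    rw [sum_insert ha, filter_insert, Int.even_add, ih]
    by_cases h : Odd (f a)
    · rw [if_pos h, card_insert_of_notMem (by simp [ha]), Nat.even_add_one,
        ← Int.not_odd_iff_even]
      tauto
    · have := Int.not_odd_iff_even.1 h
      rw [if_neg h]
      tauto

open Matrix in
lemma Matrix.star_mulVec_dotProduct_mulVec {n : Type*} [Fintype n] [DecidableEq n]
    {M : Matrix n n ℂ} (hM : M ∈ unitaryGroup n ℂ) (v : n → ℂ) :
    star (M *ᵥ v) ⬝ᵥ (M *ᵥ v) = star v ⬝ᵥ v := by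
  rw [star_mulVec, dotProduct_mulVec, vecMul_vecMul, ← star_eq_conjTranspose,
    mem_unitaryGroup_iff'.1 hM, vecMul_one]

open Finset in
lemma Finset.card_filter_update_update_add_two {ι α : Type*} [Fintype ι] [DecidableEq ι]
    {P : α → Prop} [DecidablePred P] {w : ι → α} {i₁ i₂ : ι} (hne : i₁ ≠ i₂) (h₁ : P (w i₁))
    (h₂ : P (w i₂)) {z₁ z₂ : α} (hz₁ : ¬P z₁) (hz₂ : ¬P z₂) :
    #{i | P (Function.update (Function.update w i₁ z₁) i₂ z₂ i)} + 2 = #{i | P (w i)} := by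
  have : ({i | P (Function.update (Function.update w i₁ z₁) i₂ z₂ i)} : Finset ι)
      = (({i | P (w i)} : Finset ι).erase i₁).erase i₂ := by
    ext i
    by_cases hi₂ : i = i₂
    · subst hi₂; simp [hz₂]
    by_cases hi₁ : i = i₁
    · subst hi₁; simp [hz₁, hne]
    · simp [hi₁, hi₂]
  have e₁ := card_erase_add_one (s := ({i | P (w i)} : Finset ι))
    (mem_filter.2 ⟨mem_univ _, h₁⟩)
  have e₂ := card_erase_add_one (s := ({i | P (w i)} : Finset ι).erase i₁)
    (mem_erase.2 ⟨hne.symm, mem_filter.2 ⟨mem_univ _, h₂⟩⟩)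
  rw [this]
  omega

@[ext] structure ZOmega where
  a : ℤ
  b : ℤ
  c : ℤ
  d : ℤ

namespace ZOmega

@[coe] def toComplex (t : ZOmega) : ℂ := t.a * ω ^ 3 + t.b * ω ^ 2 + t.c * ω + t.d

instance : Coe ZOmega ℂ := ⟨toComplex⟩

lemma coe_def (t : ZOmega) : (t : ℂ) = t.a * ω ^ 3 + t.b * ω ^ 2 + t.c * ω + t.d := rfl

def add (x y : ZOmega) : ZOmega := ⟨x.a + y.a, x.b + y.b, x.c + y.c, x.d + y.d⟩

def neg (x : ZOmega) : ZOmega := ⟨-x.a, -x.b, -x.c, -x.d⟩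

def mul (x y : ZOmega) : ZOmega :=
  ⟨x.a * y.d + x.b * y.c + x.c * y.b + x.d * y.a,
   x.b * y.d + x.c * y.c + x.d * y.b - x.a * y.a,
   x.c * y.d + x.d * y.c - x.a * y.b - x.b * y.a,
   x.d * y.d - x.a * y.c - x.b * y.b - x.c * y.a⟩

def mulOmega (x : ZOmega) : ZOmega := ⟨x.b, x.c, x.d, -x.a⟩

def conj (x : ZOmega) : ZOmega := ⟨-x.c, -x.b, -x.a, x.d⟩

def sqrtTwo : ZOmega := ⟨-1, 0, 1, 0⟩

-- `|t|² = t.normIntPart + t.normSqrtTwoPart * √2`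
def normIntPart (t : ZOmega) : ℤ := t.a ^ 2 + t.b ^ 2 + t.c ^ 2 + t.d ^ 2

def normSqrtTwoPart (t : ZOmega) : ℤ := t.a * t.b + t.b * t.c + t.c * t.d - t.a * t.d

@[simp] lemma coe_add (x y : ZOmega) : (x.add y : ℂ) = x + y := by
  simp only [coe_def, add]; push_cast; ring

@[simp] lemma coe_neg (x : ZOmega) : (x.neg : ℂ) = -x := by
  simp only [coe_def, neg]; push_cast; ring

@[simp] lemma coe_mul (x y : ZOmega) : (x.mul y : ℂ) = x * y := by
  simp only [coe_def, mul]; push_cast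
  linear_combination (-(x.a * y.a * ω ^ 2 : ℂ) - (x.a * y.b + x.b * y.a) * ω
    - (x.a * y.c + x.b * y.b + x.c * y.a)) * omega_pow_four

@[simp] lemma coe_mulOmega (x : ZOmega) : (x.mulOmega : ℂ) = ω * x := by
  simp only [coe_def, mulOmega]; push_cast
  linear_combination (-x.a : ℂ) * omega_pow_four

lemma coe_mulOmega_iterate (m : ℕ) (x : ZOmega) : (mulOmega^[m] x : ℂ) = ω ^ m * x := by
  induction m with
  | zero => simp
  | succ m ih => rw [Function.iterate_succ_apply', coe_mulOmega, ih]; ring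

@[simp] lemma coe_conj (x : ZOmega) : (x.conj : ℂ) = star (x : ℂ) := by
  simp only [coe_def, conj, star_add, star_mul', star_pow, star_omega, star_intCast]
  push_cast
  linear_combination ((x.a : ℂ) * ω ^ 5 - x.a * ω - x.b * ω ^ 2) * omega_pow_four

@[simp] lemma coe_sqrtTwo : (sqrtTwo : ℂ) = Real.sqrt 2 := by
  simp [coe_def, sqrtTwo, sqrt_two_eq]; ring

lemma star_coe_mul_coe (t : ZOmega) :
    star (t : ℂ) * t = t.normIntPart + t.normSqrtTwoPart * Real.sqrt 2 := by
  rw [← coe_conj, ← coe_mul, sqrt_two_eq]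
  simp only [coe_def, mul, conj, normIntPart, normSqrtTwoPart]
  push_cast; ring

lemma normIntPart_nonneg (t : ZOmega) : 0 ≤ t.normIntPart := by
  unfold normIntPart; positivity

lemma eq_zero_of_normIntPart_eq_zero {t : ZOmega} (h : t.normIntPart = 0) : t = ⟨0, 0, 0, 0⟩ := by
  unfold normIntPart at h
  ext <;> dsimp only <;> nlinarith [sq_nonneg t.a, sq_nonneg t.b, sq_nonneg t.c, sq_nonneg t.d]

lemma eq_zero_of_coe_eq_zero {t : ZOmega} (h : (t : ℂ) = 0) : t = ⟨0, 0, 0, 0⟩ := by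
  have := star_coe_mul_coe t
  rw [h, mul_zero, eq_comm] at this
  exact eq_zero_of_normIntPart_eq_zero (int_eq_of_add_mul_sqrt_two_eq (c := 0) (by simpa)).1

lemma exists_eq_mulOmega_iterate_one {t : ZOmega} (h : t.normIntPart = 1) :
    ∃ m : ℕ, t = mulOmega^[m] ⟨0, 0, 0, 1⟩ := by
  obtain ⟨a, b, c, d⟩ := t
  simp only [normIntPart] at h
  have bound : ∀ x : ℤ, x ^ 2 ≤ 1 → -1 ≤ x ∧ x ≤ 1 := fun x hx =>
    abs_le.1 (sq_le_one_iff_abs_le_one x |>.1 hx)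
  obtain ⟨ha, ha'⟩ := bound a (by nlinarith [sq_nonneg b, sq_nonneg c, sq_nonneg d])
  obtain ⟨hb, hb'⟩ := bound b (by nlinarith [sq_nonneg a, sq_nonneg c, sq_nonneg d])
  obtain ⟨hc, hc'⟩ := bound c (by nlinarith [sq_nonneg a, sq_nonneg b, sq_nonneg d])
  obtain ⟨hd, hd'⟩ := bound d (by nlinarith [sq_nonneg a, sq_nonneg b, sq_nonneg c])
  interval_cases a <;> interval_cases b <;> interval_cases c <;> interval_cases d <;>
    norm_num at h <;>
    first
    | exact ⟨0, rfl⟩ | exact ⟨1, rfl⟩ | exact ⟨2, rfl⟩ | exact ⟨3, rfl⟩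
    | exact ⟨4, rfl⟩ | exact ⟨5, rfl⟩ | exact ⟨6, rfl⟩ | exact ⟨7, rfl⟩

lemma odd_normIntPart_iff (t : ZOmega) : Odd t.normIntPart ↔ Odd (t.a + t.b + t.c + t.d) := by
  simp only [normIntPart, ← Int.not_even_iff_odd, Int.even_add, Int.even_pow]
  tauto

lemma odd_normSqrtTwoPart_iff (t : ZOmega) :
    Odd t.normSqrtTwoPart ↔ Odd (t.a + t.c) ∧ Odd (t.b + t.d) := by
  simp only [normSqrtTwoPart, ← Int.not_even_iff_odd, Int.even_add, Int.even_sub, Int.even_mul]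
  tauto

lemma exists_coe_eq_sqrt_two_mul (u : ZOmega) (hac : Even (u.a + u.c)) (hbd : Even (u.b + u.d)) :
    ∃ z : ZOmega, (u : ℂ) = Real.sqrt 2 * z ∧ z.a + z.c = u.b ∧ z.b + z.d = u.c := by
  obtain ⟨r, hr⟩ := hac
  obtain ⟨s, hs⟩ := hbd
  refine ⟨⟨u.b - s, r, s, u.c - r⟩, ?_, by ring, by ring⟩
  have : sqrtTwo.mul ⟨u.b - s, r, s, u.c - r⟩ = u := by
    ext <;> simp only [mul, sqrtTwo] <;> omega
  rw [← coe_sqrtTwo, ← coe_mul, this]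

lemma exists_add_sub_eq_sqrt_two_mul (x y : ZOmega) (hab : Even (x.a + y.a + (x.b + y.b)))
    (hbc : Even (x.b + y.b + (x.c + y.c))) (hcd : Even (x.c + y.c + (x.d + y.d))) :
    ∃ z₁ z₂ : ZOmega, (x + y : ℂ) = Real.sqrt 2 * z₁ ∧ (x - y : ℂ) = Real.sqrt 2 * z₂ ∧
      Even z₁.normIntPart ∧ Even z₂.normIntPart ∧
      (Even (x.b + y.b) → Even z₁.normSqrtTwoPart ∧ Even z₂.normSqrtTwoPart) := by
  simp only [Int.even_iff] at hab hbc hcd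
  obtain ⟨z₁, h₁, ha₁, hb₁⟩ := exists_coe_eq_sqrt_two_mul (x.add y)
    (by simp only [add, Int.even_iff]; omega) (by simp only [add, Int.even_iff]; omega)
  obtain ⟨z₂, h₂, ha₂, hb₂⟩ := exists_coe_eq_sqrt_two_mul (x.add y.neg)
    (by simp only [add, neg, Int.even_iff]; omega) (by simp only [add, neg, Int.even_iff]; omega)
  simp only [add, neg] at ha₁ hb₁ ha₂ hb₂
  refine ⟨z₁, z₂, by rw [← h₁, coe_add], by rw [← h₂, coe_add, coe_neg, sub_eq_add_neg],
    ?_, ?_, fun hb => ⟨?_, ?_⟩⟩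
  all_goals
    simp only [← Int.not_odd_iff_even, odd_normIntPart_iff, odd_normSqrtTwoPart_iff] at *
    simp only [Int.odd_iff] at *
    omega

/-- Modulo 2, `mulOmega` rotates the coordinates, and some rotation of `y` agrees with `x` or
with its complement. -/
lemma exists_pair_of_odd_normIntPart {x y : ZOmega} (hx : Odd x.normIntPart)
    (hy : Odd y.normIntPart) :
    ∃ (m : ℕ) (z₁ z₂ : ZOmega), (x + ω ^ m * y : ℂ) = Real.sqrt 2 * z₁ ∧
      (x - ω ^ m * y : ℂ) = Real.sqrt 2 * z₂ ∧ Even z₁.normIntPart ∧ Even z₂.normIntPart := by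
  rw [odd_normIntPart_iff, Int.odd_iff] at hx hy
  obtain ⟨m, -, hab, hbc, hcd⟩ : ∃ m ∈ ({0, 1, 2, 3} : Finset ℕ),
      Even (x.a + (mulOmega^[m] y).a + (x.b + (mulOmega^[m] y).b)) ∧
      Even (x.b + (mulOmega^[m] y).b + (x.c + (mulOmega^[m] y).c)) ∧
      Even (x.c + (mulOmega^[m] y).c + (x.d + (mulOmega^[m] y).d)) := by
    simp only [Finset.mem_insert, Finset.mem_singleton, exists_eq_or_imp, exists_eq_left,
      Function.iterate_succ, Function.iterate_zero, Function.comp_apply, id, mulOmega,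
      Int.even_iff]
    omega
  obtain ⟨z₁, z₂, h₁, h₂, he₁, he₂, -⟩ := exists_add_sub_eq_sqrt_two_mul x _ hab hbc hcd
  exact ⟨m, z₁, z₂, by rwa [← coe_mulOmega_iterate], by rwa [← coe_mulOmega_iterate], he₁, he₂⟩

/-- Modulo 2, some rotation of the coordinates of `y` agrees with `x`. -/
lemma exists_pair_of_odd_normSqrtTwoPart {x y : ZOmega} (hx : Odd x.normSqrtTwoPart)
    (hy : Odd y.normSqrtTwoPart) :
    ∃ (m : ℕ) (z₁ z₂ : ZOmega), (x + ω ^ m * y : ℂ) = Real.sqrt 2 * z₁ ∧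
      (x - ω ^ m * y : ℂ) = Real.sqrt 2 * z₂ ∧
      (Even z₁.normIntPart ∧ Even z₁.normSqrtTwoPart) ∧
      (Even z₂.normIntPart ∧ Even z₂.normSqrtTwoPart) := by
  rw [odd_normSqrtTwoPart_iff, Int.odd_iff, Int.odd_iff] at hx hy
  obtain ⟨m, -, hab, hbc, hcd, hb⟩ : ∃ m ∈ ({0, 1, 2, 3} : Finset ℕ),
      Even (x.a + (mulOmega^[m] y).a + (x.b + (mulOmega^[m] y).b)) ∧
      Even (x.b + (mulOmega^[m] y).b + (x.c + (mulOmega^[m] y).c)) ∧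
      Even (x.c + (mulOmega^[m] y).c + (x.d + (mulOmega^[m] y).d)) ∧
      Even (x.b + (mulOmega^[m] y).b) := by
    simp only [Finset.mem_insert, Finset.mem_singleton, exists_eq_or_imp, exists_eq_left,
      Function.iterate_succ, Function.iterate_zero, Function.comp_apply, id, mulOmega,
      Int.even_iff]
    omega
  obtain ⟨z₁, z₂, h₁, h₂, he₁, he₂, hq⟩ := exists_add_sub_eq_sqrt_two_mul x _ hab hbc hcd
  exact ⟨m, z₁, z₂, by rwa [← coe_mulOmega_iterate], by rwa [← coe_mulOmega_iterate],
    ⟨he₁, (hq hb).1⟩, ⟨he₂, (hq hb).2⟩⟩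

lemma exists_coe_eq_sqrt_two_mul_of_even {t : ZOmega} (hp : Even t.normIntPart)
    (hq : Even t.normSqrtTwoPart) : ∃ s : ZOmega, (t : ℂ) = Real.sqrt 2 * s := by
  rw [← Int.not_odd_iff_even, odd_normIntPart_iff] at hp
  rw [← Int.not_odd_iff_even, odd_normSqrtTwoPart_iff] at hq
  simp only [Int.odd_iff] at hp hq
  obtain ⟨s, hs, -⟩ := exists_coe_eq_sqrt_two_mul t (by rw [Int.even_iff]; omega)
    (by rw [Int.even_iff]; omega)
  exact ⟨s, hs⟩

lemma exists_sqrt_two_pow_mul_eq_of_le {z : ℂ} {k K : ℕ} {t : ZOmega}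
    (h : (Real.sqrt 2 : ℂ) ^ k * z = t) (hkK : k ≤ K) :
    ∃ t' : ZOmega, (Real.sqrt 2 : ℂ) ^ K * z = t' := by
  obtain ⟨d, rfl⟩ := Nat.exists_eq_add_of_le hkK
  induction d with
  | zero => exact ⟨t, h⟩
  | succ d ih =>
    obtain ⟨t', ht'⟩ := ih (by omega)
    exact ⟨sqrtTwo.mul t', by rw [coe_mul, coe_sqrtTwo, ← ht', ← add_assoc, pow_succ']; ring⟩

end ZOmega

open ZOmega in
/-- The ring `𝔻[ω] = ℤ[ω][1/√2]`, as the elements made integral by a power of `√2`. -/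
def Dω : Subring ℂ where
  carrier := {z | ∃ (k : ℕ) (t : ZOmega), (Real.sqrt 2 : ℂ) ^ k * z = t}
  mul_mem' := by
    rintro _ _ ⟨k, s, hs⟩ ⟨l, t, ht⟩
    exact ⟨k + l, s.mul t, by rw [coe_mul, ← hs, ← ht]; ring⟩
  one_mem' := ⟨0, ⟨0, 0, 0, 1⟩, by simp [coe_def]⟩
  add_mem' := by
    rintro x y ⟨k, s, hs⟩ ⟨l, t, ht⟩
    obtain ⟨s', hs'⟩ := exists_sqrt_two_pow_mul_eq_of_le hs (le_max_left k l)
    obtain ⟨t', ht'⟩ := exists_sqrt_two_pow_mul_eq_of_le ht (le_max_right k l)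
    exact ⟨max k l, s'.add t', by rw [coe_add, ← hs', ← ht']; ring⟩
  zero_mem' := ⟨0, ⟨0, 0, 0, 0⟩, by simp [coe_def]⟩
  neg_mem' := by
    rintro _ ⟨k, t, ht⟩
    exact ⟨k, t.neg, by rw [coe_neg, ← ht]; ring⟩

namespace Dω

open ZOmega

lemma omega_mem : ω ∈ Dω := ⟨0, ⟨0, 0, 1, 0⟩, by simp [coe_def]⟩

lemma inv_sqrt_two_mem : (Real.sqrt 2 : ℂ)⁻¹ ∈ Dω :=
  ⟨1, ⟨0, 0, 0, 1⟩, by simp [coe_def]⟩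

lemma star_mem {z : ℂ} (hz : z ∈ Dω) : star z ∈ Dω := by
  obtain ⟨k, t, ht⟩ := hz
  refine ⟨k, t.conj, ?_⟩
  rw [coe_conj, ← ht, star_mul', star_pow, Complex.star_def, Complex.conj_ofReal]

lemma _root_.IsDyadic.coe_mem_Dω {q : ℚ} (hq : IsDyadic q) : (q : ℂ) ∈ Dω := by
  obtain ⟨a, m, rfl⟩ := hq
  refine ⟨2 * m, ⟨0, 0, 0, a⟩, ?_⟩
  simp only [coe_def, pow_mul, ofReal_sqrt_two_sq]
  push_cast
  field_simp
  ring

lemma _root_.inDω.mem_Dω {z : ℂ} (hz : inDω z) : z ∈ Dω := by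
  obtain ⟨a, b, c, d, ha, hb, hc, hd, rfl⟩ := hz
  have hω (m : ℕ) := pow_mem omega_mem m
  exact add_mem (add_mem (add_mem (mul_mem ha.coe_mem_Dω (hω 3)) (mul_mem hb.coe_mem_Dω (hω 2)))
    (mul_mem hc.coe_mem_Dω omega_mem)) hd.coe_mem_Dω

lemma exists_sqrt_two_pow_mul_eq {n : ℕ} {v : Fin n → ℂ} (hv : ∀ i, v i ∈ Dω) :
    ∃ (k : ℕ) (w : Fin n → ZOmega), ∀ i, (Real.sqrt 2 : ℂ) ^ k * v i = w i := by
  choose k t ht using hv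
  choose w hw using fun i =>
    exists_sqrt_two_pow_mul_eq_of_le (ht i) (Finset.le_sup (f := k) (Finset.mem_univ i))
  exact ⟨_, w, hw⟩

end Dω

section LevelMatrices

open Matrix

variable {n : ℕ}

lemma oneLevel_eq_diagonal (a : ℂ) (j : Fin n) :
    oneLevel a j = diagonal (Function.update 1 j a) := by
  ext p q
  simp only [oneLevel, of_apply, diagonal_apply, Function.update_apply, Pi.one_apply]

lemma oneLevel_mulVec (a : ℂ) (j : Fin n) (v : Fin n → ℂ) :
    oneLevel a j *ᵥ v = Function.update v j (a * v j) := by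
  ext p
  rw [oneLevel_eq_diagonal, mulVec_diagonal]
  by_cases hp : p = j <;> simp [hp]

lemma oneLevel_mem_unitaryGroup {a : ℂ} (ha : star a * a = 1) (j : Fin n) :
    oneLevel a j ∈ unitaryGroup (Fin n) ℂ := by
  rw [mem_unitaryGroup_iff', oneLevel_eq_diagonal, star_eq_conjTranspose, diagonal_conjTranspose,
    diagonal_mul_diagonal, ← diagonal_one]
  congr 1
  ext p
  by_cases hp : p = j <;> simp [hp]
  exact ha

lemma twoLevel_mulVec (U : Matrix (Fin 2) (Fin 2) ℂ) {j l : Fin n} (hjl : j ≠ l)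
    (v : Fin n → ℂ) :
    twoLevel U j l *ᵥ v = Function.update (Function.update v j (U 0 0 * v j + U 0 1 * v l)) l
      (U 1 0 * v j + U 1 1 * v l) := by
  ext p
  simp only [mulVec, dotProduct, twoLevel, of_apply]
  by_cases hpl : p = l
  · subst hpl
    rw [Fintype.sum_eq_add j p hjl (by intro q ⟨hqj, hqp⟩; simp [hjl.symm, hqj, hqp, Ne.symm hqp])]
    simp [hjl.symm]
  by_cases hpj : p = j
  · subst hpj
    rw [Fintype.sum_eq_add p l hjl (by intro q ⟨hqp, hql⟩; simp [hqp, hql, Ne.symm hqp])]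
    simp [hjl, hjl.symm]
  · rw [Fintype.sum_eq_single p (by intro q hqp; simp [hpj, hpl, Ne.symm hqp])]
    simp [hpj, hpl]

lemma twoLevel_mul (A B : Matrix (Fin 2) (Fin 2) ℂ) {j l : Fin n} (hjl : j ≠ l) :
    twoLevel A j l * twoLevel B j l = twoLevel (A * B) j l := by
  refine ext_iff_mulVec.2 fun v => ?_
  rw [← mulVec_mulVec]
  simp only [twoLevel_mulVec _ hjl]
  ext p
  by_cases hpl : p = l
  · subst hpl; simp [hjl, mul_apply, Fin.sum_univ_two]; ring
  by_cases hpj : p = j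
  · subst hpj; simp [hjl, mul_apply, Fin.sum_univ_two]; ring
  · simp [hpj, hpl]

lemma twoLevel_one {j l : Fin n} (hjl : j ≠ l) :
    twoLevel (1 : Matrix (Fin 2) (Fin 2) ℂ) j l = 1 := by
  refine ext_iff_mulVec.2 fun v => ?_
  rw [twoLevel_mulVec _ hjl, one_mulVec]
  simp

lemma twoLevel_conjTranspose (U : Matrix (Fin 2) (Fin 2) ℂ) (j l : Fin n) :
    (twoLevel U j l)ᴴ = twoLevel Uᴴ j l := by
  ext p q
  simp only [twoLevel, conjTranspose_apply, of_apply]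
  by_cases hpj : p = j <;> by_cases hpl : p = l <;> by_cases hqj : q = j <;>
    by_cases hql : q = l <;> simp_all [eq_comm]

lemma twoLevel_mem_unitaryGroup {U : Matrix (Fin 2) (Fin 2) ℂ} (hU : U ∈ unitaryGroup (Fin 2) ℂ)
    {j l : Fin n} (hjl : j ≠ l) : twoLevel U j l ∈ unitaryGroup (Fin n) ℂ := by
  rw [mem_unitaryGroup_iff', star_eq_conjTranspose, twoLevel_conjTranspose,
    twoLevel_mul _ _ hjl, ← star_eq_conjTranspose, mem_unitaryGroup_iff'.1 hU, twoLevel_one hjl]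

lemma twoLevel_Tmat {j l : Fin n} (hjl : j ≠ l) : twoLevel Tmat j l = oneLevel ω l := by
  refine ext_iff_mulVec.2 fun v => ?_
  rw [twoLevel_mulVec _ hjl, oneLevel_mulVec]
  ext p
  by_cases hpl : p = l
  · subst hpl; simp [Tmat]
  by_cases hpj : p = j
  · subst hpj; simp [Tmat, hpl]
  · simp [hpj, hpl]

lemma Xmat_mem_unitaryGroup : Xmat ∈ unitaryGroup (Fin 2) ℂ := by
  rw [mem_unitaryGroup_iff']
  ext i j
  fin_cases i <;> fin_cases j <;> simp [Xmat, mul_apply, Fin.sum_univ_two]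

lemma Hmat_mem_unitaryGroup : Hmat ∈ unitaryGroup (Fin 2) ℂ := by
  have h : (Real.sqrt 2 : ℂ)⁻¹ * (Real.sqrt 2 : ℂ)⁻¹ = 1 / 2 := by
    rw [← mul_inv, ← pow_two, ofReal_sqrt_two_sq, one_div]
  rw [mem_unitaryGroup_iff']
  ext i j
  fin_cases i <;> fin_cases j <;> simp [Hmat, mul_apply, Fin.sum_univ_two, h] <;> norm_num

lemma IsLevelGen.mem_unitaryGroup {M : Matrix (Fin n) (Fin n) ℂ} (h : IsLevelGen M) :
    M ∈ unitaryGroup (Fin n) ℂ := by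
  rcases h with ⟨j, l, hjl, rfl | rfl | rfl⟩ | ⟨j, rfl⟩
  · exact twoLevel_mem_unitaryGroup Xmat_mem_unitaryGroup hjl
  · exact twoLevel_mem_unitaryGroup Hmat_mem_unitaryGroup hjl
  · exact twoLevel_Tmat hjl ▸ oneLevel_mem_unitaryGroup star_omega_mul_omega l
  · exact oneLevel_mem_unitaryGroup star_omega_mul_omega j

lemma twoLevel_mem_matrix {S : Subring ℂ} {U : Matrix (Fin 2) (Fin 2) ℂ} (hU : U ∈ S.matrix)
    (j l : Fin n) : twoLevel U j l ∈ S.matrix := by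
  intro p q
  simp only [twoLevel, of_apply]
  split_ifs <;> first | exact hU _ _ | exact one_mem S | exact zero_mem S

lemma oneLevel_mem_matrix {S : Subring ℂ} {a : ℂ} (ha : a ∈ S) (j : Fin n) :
    oneLevel a j ∈ S.matrix := by
  intro p q
  simp only [oneLevel, of_apply]
  split_ifs <;> first | exact ha | exact one_mem S | exact zero_mem S

lemma IsLevelGen.mem_matrix_Dω {M : Matrix (Fin n) (Fin n) ℂ} (h : IsLevelGen M) :
    M ∈ Dω.matrix := by
  have hX : Xmat ∈ Dω.matrix := by
    intro p q
    fin_cases p <;> fin_cases q <;> simp [Xmat, zero_mem, one_mem]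
  have hH : Hmat ∈ Dω.matrix := by
    intro p q
    fin_cases p <;> fin_cases q <;> simp [Hmat, Dω.inv_sqrt_two_mem]
  rcases h with ⟨j, l, hjl, rfl | rfl | rfl⟩ | ⟨j, rfl⟩
  · exact twoLevel_mem_matrix hX j l
  · exact twoLevel_mem_matrix hH j l
  · exact twoLevel_Tmat hjl ▸ oneLevel_mem_matrix Dω.omega_mem l
  · exact oneLevel_mem_matrix Dω.omega_mem j

end LevelMatrices

section ColumnReduction

open Matrix Finset ZOmega

variable {n : ℕ}

def leadingColumnsOne (j : ℕ) : Submonoid (Matrix (Fin n) (Fin n) ℂ) where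
  carrier := {M | ∀ p q : Fin n, (q : ℕ) < j → M p q = (1 : Matrix (Fin n) (Fin n) ℂ) p q}
  mul_mem' {M N} hM hN p q hq :=
    calc (M * N) p q = (M * 1 : Matrix (Fin n) (Fin n) ℂ) p q := by
          simp only [mul_apply, hN _ q hq]
      _ = _ := by rw [mul_one, hM p q hq]
  one_mem' _ _ _ := rfl

lemma twoLevel_mem_leadingColumnsOne (A : Matrix (Fin 2) (Fin 2) ℂ) {j : ℕ} {i l : Fin n}
    (hi : j ≤ i) (hl : j ≤ l) : twoLevel A i l ∈ leadingColumnsOne j := by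
  intro p q hq
  have hqi : q ≠ i := by rintro rfl; omega
  have hql : q ≠ l := by rintro rfl; omega
  simp [twoLevel, one_apply, hqi, hql]

lemma oneLevel_mem_leadingColumnsOne (a : ℂ) {j : ℕ} {i : Fin n} (hi : j ≤ i) :
    oneLevel a i ∈ leadingColumnsOne j := by
  intro p q hq
  have hqi : q ≠ i := by rintro rfl; omega
  by_cases hpq : p = q <;> simp [oneLevel, one_apply, hpq, hqi]

def ColumnReducible (j : Fin n) (v : Fin n → ℂ) : Prop :=
  ∃ L : List (Matrix (Fin n) (Fin n) ℂ),
    (∀ M ∈ L, IsLevelGen M ∧ M ∈ leadingColumnsOne j) ∧ L.prod *ᵥ v = Pi.single j 1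

namespace ColumnReducible

variable {j : Fin n} {v : Fin n → ℂ}

lemma of_mulVec {M : Matrix (Fin n) (Fin n) ℂ} (hM : IsLevelGen M)
    (hMj : M ∈ leadingColumnsOne j) (h : ColumnReducible j (M *ᵥ v)) : ColumnReducible j v := by
  obtain ⟨L, hL, hLv⟩ := h
  refine ⟨L ++ [M], fun N hN => ?_, by rwa [List.prod_append, List.prod_singleton,
    ← mulVec_mulVec]⟩
  rcases List.mem_append.1 hN with hN | hN
  · exact hL N hN
  · exact List.mem_singleton.1 hN ▸ ⟨hM, hMj⟩

lemma of_update_omega_pow_mul {i : Fin n} (hi : (j : ℕ) ≤ i) (m : ℕ)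
    (h : ColumnReducible j (Function.update v i (ω ^ m * v i))) : ColumnReducible j v := by
  induction m generalizing v with
  | zero => simpa using h
  | succ m ih =>
    refine ih (of_mulVec (Or.inr ⟨i, rfl⟩) (oneLevel_mem_leadingColumnsOne ω hi) ?_)
    rwa [oneLevel_mulVec, Function.update_idem, Function.update_self, ← mul_assoc, ← pow_succ']

lemma single_one_of_le {i : Fin n} (hi : (j : ℕ) ≤ i) : ColumnReducible j (Pi.single i 1) := by
  rcases eq_or_ne i j with rfl | hij
  · exact ⟨[], by simp, by rw [List.prod_nil, one_mulVec]⟩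
  refine of_mulVec (Or.inl ⟨j, i, hij.symm, Or.inl rfl⟩)
    (twoLevel_mem_leadingColumnsOne _ le_rfl hi) ⟨[], by simp, ?_⟩
  ext p
  rw [twoLevel_mulVec _ hij.symm]
  by_cases hpi : p = i <;> by_cases hpj : p = j <;> simp_all [Xmat]

end ColumnReducible

structure IsScaledColumn (j : Fin n) (k : ℕ) (v : Fin n → ℂ) (w : Fin n → ZOmega) : Prop where
  sqrt_two_pow_mul : ∀ i, (Real.sqrt 2 : ℂ) ^ k * v i = w i
  norm_eq_one : star v ⬝ᵥ v = 1
  eq_zero_of_lt : ∀ i, i < j → v i = 0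

namespace IsScaledColumn

variable {j : Fin n} {k : ℕ} {v : Fin n → ℂ} {w : Fin n → ZOmega}

lemma sum_normIntPart (h : IsScaledColumn j k v w) :
    ∑ i, (w i).normIntPart = 2 ^ k ∧ ∑ i, (w i).normSqrtTwoPart = 0 := by
  have key : ∑ i, star (w i : ℂ) * w i = 2 ^ k := by
    calc ∑ i, star (w i : ℂ) * w i = ∑ i, ((Real.sqrt 2 : ℂ) ^ 2) ^ k * (star (v i) * v i) := by
          refine sum_congr rfl fun i _ => ?_
          rw [← h.sqrt_two_pow_mul i, star_mul', star_pow, Complex.star_def, Complex.conj_ofReal]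
          ring
      _ = 2 ^ k := by
          have := h.norm_eq_one
          simp only [dotProduct, Pi.star_apply] at this
          rw [← mul_sum, ofReal_sqrt_two_sq, this, mul_one]
  simp only [star_coe_mul_coe, sum_add_distrib, ← sum_mul] at key
  exact int_eq_of_add_mul_sqrt_two_eq (by exact_mod_cast key)

lemma le_of_ne_zero (h : IsScaledColumn j k v w) {i : Fin n} (hi : w i ≠ ⟨0, 0, 0, 0⟩) :
    j ≤ i := by
  by_contra hlt
  refine hi (eq_zero_of_coe_eq_zero ?_)
  rw [← h.sqrt_two_pow_mul, h.eq_zero_of_lt i (not_le.1 hlt), mul_zero]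

lemma exists_pair_step (h : IsScaledColumn j k v w) {i₁ i₂ : Fin n} (hne : i₁ ≠ i₂)
    (h₁ : (j : ℕ) ≤ i₁) (h₂ : (j : ℕ) ≤ i₂) {m : ℕ} {z₁ z₂ : ZOmega}
    (hz₁ : (w i₁ + ω ^ m * w i₂ : ℂ) = Real.sqrt 2 * z₁)
    (hz₂ : (w i₁ - ω ^ m * w i₂ : ℂ) = Real.sqrt 2 * z₂) :
    ∃ v', IsScaledColumn j k v' (Function.update (Function.update w i₁ z₁) i₂ z₂) ∧
      (ColumnReducible j v' → ColumnReducible j v) := by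
  set u := Function.update v i₂ (ω ^ m * v i₂)
  have hu : u = oneLevel (ω ^ m) i₂ *ᵥ v := (oneLevel_mulVec _ _ _).symm
  have key (s : ℂ) (z : ZOmega) (hz : (w i₁ + s * w i₂ : ℂ) = Real.sqrt 2 * z) :
      (Real.sqrt 2 : ℂ) ^ k * ((Real.sqrt 2 : ℂ)⁻¹ * (v i₁ + s * v i₂)) = z := by
    rw [← h.sqrt_two_pow_mul, ← h.sqrt_two_pow_mul] at hz
    field_simp [ofReal_sqrt_two_ne_zero]
    linear_combination hz
  refine ⟨twoLevel Hmat i₁ i₂ *ᵥ u, ⟨fun i => ?_, ?_, fun i hi => ?_⟩, fun hred => ?_⟩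
  · rw [twoLevel_mulVec _ hne]
    by_cases hi₂ : i = i₂
    · subst hi₂
      rw [Function.update_self, Function.update_self, ← key (-ω ^ m) z₂ (by rw [← hz₂]; ring)]
      simp [Hmat, u, hne]
      ring
    by_cases hi₁ : i = i₁
    · subst hi₁
      rw [Function.update_of_ne hne, Function.update_of_ne hne, Function.update_self,
        Function.update_self, ← key (ω ^ m) z₁ hz₁]
      simp [Hmat, u, hne]
      ring
    · simp [u, hi₁, hi₂, h.sqrt_two_pow_mul]
  · have hω : star (ω ^ m) * ω ^ m = 1 := by
      rw [star_pow, ← mul_pow, star_omega_mul_omega, one_pow]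
    rw [star_mulVec_dotProduct_mulVec (twoLevel_mem_unitaryGroup Hmat_mem_unitaryGroup hne), hu,
      star_mulVec_dotProduct_mulVec (oneLevel_mem_unitaryGroup hω i₂), h.norm_eq_one]
  · have hi₁ : i ≠ i₁ := by rintro rfl; exact absurd h₁ (not_le.2 hi)
    have hi₂ : i ≠ i₂ := by rintro rfl; exact absurd h₂ (not_le.2 hi)
    simp [twoLevel_mulVec _ hne, u, hi₁, hi₂, h.eq_zero_of_lt i hi]
  · exact ColumnReducible.of_update_omega_pow_mul h₂ m <| ColumnReducible.of_mulVec
      (Or.inl ⟨i₁, i₂, hne, Or.inr (Or.inl rfl)⟩) (twoLevel_mem_leadingColumnsOne _ h₁ h₂) hred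

lemma columnReducible_of_pairing (P Q : ZOmega → Prop) [DecidablePred P]
    (hP : ¬P ⟨0, 0, 0, 0⟩)
    (hpair : ∀ x y, P x → P y → ∃ (m : ℕ) (z₁ z₂ : ZOmega),
      (x + ω ^ m * y : ℂ) = Real.sqrt 2 * z₁ ∧ (x - ω ^ m * y : ℂ) = Real.sqrt 2 * z₂ ∧
        (¬P z₁ ∧ Q z₁) ∧ (¬P z₂ ∧ Q z₂))
    (heven : ∀ v w, IsScaledColumn j k v w → Even #{i | P (w i)})
    (hdone : ∀ v w, IsScaledColumn j k v w → (∀ i, ¬P (w i) ∧ Q (w i)) → ColumnReducible j v)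
    (h : IsScaledColumn j k v w) (hQ : ∀ i, Q (w i)) : ColumnReducible j v := by
  induction hN : #{i | P (w i)} using Nat.strong_induction_on
    generalizing v w with
  | _ N ih =>
  rcases Nat.eq_zero_or_pos N with rfl | hpos
  · refine hdone v w h fun i => ⟨fun hi => ?_, hQ i⟩
    rw [card_eq_zero, filter_eq_empty_iff] at hN
    exact hN (mem_univ i) hi
  obtain ⟨i₁, hi₁, i₂, hi₂, hne⟩ := one_lt_card.1 <|
      show 1 < #{i | P (w i)} by
    obtain ⟨r, hr⟩ := heven v w h
    omega
  rw [mem_filter] at hi₁ hi₂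
  have hle : ∀ i, P (w i) → (j : ℕ) ≤ i := fun i hi => h.le_of_ne_zero fun h0 => hP (h0 ▸ hi)
  obtain ⟨m, z₁, z₂, hz₁, hz₂, ⟨hP₁, hQ₁⟩, ⟨hP₂, hQ₂⟩⟩ := hpair _ _ hi₁.2 hi₂.2
  obtain ⟨v', hv', hred⟩ := h.exists_pair_step hne (hle _ hi₁.2) (hle _ hi₂.2) hz₁ hz₂
  refine hred (ih _ ?_ hv' (fun i => ?_) rfl)
  · have := card_filter_update_update_add_two hne hi₁.2 hi₂.2 hP₁ hP₂
    omega
  · by_cases hi₂ : i = i₂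
    · simp [hi₂, hQ₂]
    by_cases hi₁ : i = i₁
    · simp [hi₁, hne, hQ₁]
    · simp [hi₁, hi₂, hQ]

lemma exists_eq_single_omega_pow (h : IsScaledColumn j 0 v w) :
    ∃ (i₀ : Fin n) (m : ℕ), v = Pi.single i₀ (ω ^ m) := by
  have hsum : ∑ i, (w i).normIntPart = 1 := by simpa using h.sum_normIntPart.1
  obtain ⟨i₀, -, hi₀⟩ := exists_ne_zero_of_sum_ne_zero (hsum ▸ one_ne_zero)
  have hsplit := add_sum_erase univ (fun i => (w i).normIntPart) (mem_univ i₀)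
  have hrest := sum_nonneg fun i (_ : i ∈ univ.erase i₀) => normIntPart_nonneg (w i)
  have hone : (w i₀).normIntPart = 1 := by have := normIntPart_nonneg (w i₀); omega
  have hzero (i) (hi : i ≠ i₀) : w i = ⟨0, 0, 0, 0⟩ :=
    eq_zero_of_normIntPart_eq_zero <| (sum_eq_zero_iff_of_nonneg fun i _ =>
      normIntPart_nonneg (w i)).1 (by omega) i (mem_erase.2 ⟨hi, mem_univ i⟩)
  obtain ⟨m, hm⟩ := exists_eq_mulOmega_iterate_one hone
  refine ⟨i₀, m, funext fun i => ?_⟩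
  have hi := h.sqrt_two_pow_mul i
  rw [pow_zero, one_mul] at hi
  by_cases hii₀ : i = i₀
  · subst hii₀
    rw [hi, hm, coe_mulOmega_iterate]
    simp [coe_def]
  · simp [hi, hii₀, hzero i hii₀, coe_def]

lemma columnReducible_zero (h : IsScaledColumn j 0 v w) : ColumnReducible j v := by
  obtain ⟨i₀, m, hv⟩ := h.exists_eq_single_omega_pow
  have hle : (j : ℕ) ≤ i₀ := by
    by_contra hlt
    have := h.eq_zero_of_lt i₀ (not_le.1 hlt)
    simp [hv, right_ne_zero_of_mul_eq_one star_omega_mul_omega] at this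
  refine ColumnReducible.of_update_omega_pow_mul hle (7 * m) ?_
  convert ColumnReducible.single_one_of_le hle using 2
  rw [hv, Pi.single_eq_same, ← pow_add, show 7 * m + m = 8 * m by ring, pow_mul, omega_pow_eight,
    one_pow]
  exact Function.update_idem _ _ _

lemma columnReducible_succ (ih : ∀ v w, IsScaledColumn j k v w → ColumnReducible j v)
    (h : IsScaledColumn j (k + 1) v w) : ColumnReducible j v := by
  refine columnReducible_of_pairing (fun t => Odd t.normIntPart) (fun _ => True)
    (by simp [normIntPart]) (fun x y hx hy => ?_) (fun v w h => ?_) (fun v₁ w₁ h₁ hall₁ => ?_) h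
    fun _ => trivial
  · obtain ⟨m, z₁, z₂, h₁, h₂, e₁, e₂⟩ := exists_pair_of_odd_normIntPart hx hy
    exact ⟨m, z₁, z₂, h₁, h₂, ⟨Int.not_odd_iff_even.2 e₁, trivial⟩,
      ⟨Int.not_odd_iff_even.2 e₂, trivial⟩⟩
  · rw [← Int.even_sum_iff_even_card_odd, h.sum_normIntPart.1, pow_succ]
    exact even_two.mul_left _
  refine columnReducible_of_pairing (fun t => Odd t.normSqrtTwoPart) (fun t => Even t.normIntPart)
    (by simp [normSqrtTwoPart]) (fun x y hx hy => ?_) (fun v w h => ?_)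
    (fun v₂ w₂ h₂ hall₂ => ?_) h₁ fun i => Int.not_odd_iff_even.1 (hall₁ i).1
  · obtain ⟨m, z₁, z₂, h₁, h₂, e₁, e₂⟩ := exists_pair_of_odd_normSqrtTwoPart hx hy
    exact ⟨m, z₁, z₂, h₁, h₂, ⟨Int.not_odd_iff_even.2 e₁.2, e₁.1⟩,
      ⟨Int.not_odd_iff_even.2 e₂.2, e₂.1⟩⟩
  · rw [← Int.even_sum_iff_even_card_odd, h.sum_normIntPart.2]
    exact Even.zero
  choose s hs using fun i =>
    exists_coe_eq_sqrt_two_mul_of_even (hall₂ i).2 (Int.not_odd_iff_even.1 (hall₂ i).1)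
  refine ih v₂ s ⟨fun i => mul_left_cancel₀ ofReal_sqrt_two_ne_zero ?_, h₂.norm_eq_one,
    h₂.eq_zero_of_lt⟩
  rw [← hs, ← h₂.sqrt_two_pow_mul, pow_succ]
  ring

theorem columnReducible (h : IsScaledColumn j k v w) : ColumnReducible j v := by
  induction k generalizing v w with
  | zero => exact h.columnReducible_zero
  | succ k ih => exact columnReducible_succ (fun v w h => ih h) h

end IsScaledColumn

theorem columnReducible_of_mem_Dω {j : Fin n} {v : Fin n → ℂ} (hv : ∀ i, v i ∈ Dω)
    (hnorm : star v ⬝ᵥ v = 1) (hzero : ∀ i, i < j → v i = 0) : ColumnReducible j v := by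
  obtain ⟨k, w, hw⟩ := Dω.exists_sqrt_two_pow_mul_eq hv
  exact IsScaledColumn.columnReducible ⟨hw, hnorm, hzero⟩

end ColumnReduction

section MatrixReduction

open Matrix

variable {n : ℕ}

lemma apply_eq_zero_of_mem_leadingColumnsOne {U : Matrix (Fin n) (Fin n) ℂ}
    (hU : U ∈ unitaryGroup (Fin n) ℂ) {j : ℕ} (hj : U ∈ leadingColumnsOne j) {p q : Fin n}
    (hp : (p : ℕ) < j) (hq : j ≤ (q : ℕ)) : U p q = 0 := by
  have hpq : p ≠ q := by rintro rfl; omega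
  have h := congrFun (congrFun (mem_unitaryGroup_iff'.1 hU) p) q
  rw [one_apply_ne hpq, mul_apply] at h
  rw [← h, Fintype.sum_eq_single p fun s hs => by simp [hj s p hp, one_apply_ne hs]]
  simp [hj p p hp]

theorem exists_list_prod_mul_eq_one (j : ℕ) {U : Matrix (Fin n) (Fin n) ℂ}
    (hU : U ∈ unitaryGroup (Fin n) ℂ) (hD : U ∈ Dω.matrix) (hj : U ∈ leadingColumnsOne j) :
    ∃ L : List (Matrix (Fin n) (Fin n) ℂ), (∀ M ∈ L, IsLevelGen M) ∧ L.prod * U = 1 := by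
  by_cases hjn : n ≤ j
  · refine ⟨[], by simp, ?_⟩
    ext p q
    rw [List.prod_nil, one_mul]
    exact hj p q (by omega)
  set c : Fin n := ⟨j, by omega⟩
  obtain ⟨L₁, hL₁, hL₁v⟩ : ColumnReducible c fun i => U i c := by
    refine columnReducible_of_mem_Dω (fun i => hD i c) ?_
      fun i hi => apply_eq_zero_of_mem_leadingColumnsOne hU hj hi le_rfl
    simpa [dotProduct, mul_apply] using congrFun (congrFun (mem_unitaryGroup_iff'.1 hU) c) c
  have hL₁U : L₁.prod ∈ unitaryGroup (Fin n) ℂ :=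
    Submonoid.list_prod_mem _ fun M hM => (hL₁ M hM).1.mem_unitaryGroup
  have hL₁D : L₁.prod ∈ Dω.matrix :=
    Subring.list_prod_mem _ fun M hM => (hL₁ M hM).1.mem_matrix_Dω
  have hL₁j : L₁.prod ∈ leadingColumnsOne j :=
    Submonoid.list_prod_mem _ fun M hM => (hL₁ M hM).2
  obtain ⟨L₂, hL₂, hL₂U⟩ := exists_list_prod_mul_eq_one (j + 1) (mul_mem hL₁U hU)
    (mul_mem hL₁D hD) fun p q hq => by
      rcases Nat.lt_succ_iff_lt_or_eq.1 hq with hq | hq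
      · exact mul_mem hL₁j hj p q hq
      · obtain rfl : q = c := Fin.ext hq
        exact (congrFun hL₁v p).trans (Pi.single_apply _ _ _)
  refine ⟨L₂ ++ L₁, fun M hM => ?_, by rw [List.prod_append, mul_assoc, hL₂U]⟩
  rcases List.mem_append.1 hM with hM | hM
  · exact hL₂ M hM
  · exact (hL₁ M hM).1
termination_by n - j

end MatrixReduction

/-- Matrix decomposition: every unitary `n×n` matrix with entries in `𝔻[ω]` is a finite
product of one- and two-level unitary matrices of types `X`, `H`, `T`, and `ω`. -/
theorem stmt10 (n : ℕ) (U : Matrix (Fin n) (Fin n) ℂ)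
    (hU : U ∈ Matrix.unitaryGroup (Fin n) ℂ)
    (hent : ∀ i j, inDω (U i j)) :
    ∃ L : List (Matrix (Fin n) (Fin n) ℂ),
      (∀ M ∈ L, IsLevelGen M) ∧ U = L.prod := by
  obtain ⟨L, hL, hLU⟩ := exists_list_prod_mul_eq_one 0 (Unitary.star_mem hU)
    (fun p q => Dω.star_mem (hent q p).mem_Dω) fun _ _ hq => absurd hq (Nat.not_lt_zero _)
  refine ⟨L, hL, ?_⟩
  calc U = L.prod * star U * U := by rw [hLU, one_mul]
    _ = L.prod := by rw [mul_assoc, Matrix.mem_unitaryGroup_iff'.1 hU, mul_one]
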